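/- For all m ≥ 1: ∑_{b=0}^{m} B_b(h_{m−b}[q^{-1}X]) = 0 in Sym[X], where (B_r F)[X] = F[X − (q−1)z^{-1}]·Exp[−zX]|_{z^r} (so B_0 is also defined, by taking the coefficient of z^0). -/

import Mathlib

/-!
STATEMENT 17: ∑_{b=0}^{m} B_b(h_{m−b}[q⁻¹X]) = 0 in Sym[X], for all m ≥ 1,
where (B_r F)[X] = F[X − (q−1)z⁻¹]·Exp[−zX]|_{z^r}.
Symmetric functions are presented in the power-sum basis (variable m ↦ p_{m+1}).
-/

noncomputable section
open MvPolynomial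

abbrev K : Type := RatFunc ℚ

noncomputable def q : K := RatFunc.X

/-- The ring of symmetric functions SymF[X] over ℚ(q), presented as the polynomial
ring on the power sums: the variable `m` stands for p_{m+1}. -/
abbrev SymF : Type := MvPolynomial ℕ K

/-- h_m[X] in the power-sum presentation, via Newton's identity
(m+1)·h_{m+1} = ∑_{i=1}^{m+1} p_i h_{m+1-i}. -/
noncomputable def Hh : ℕ → SymF
  | 0 => 1
  | (m+1) => (((m : K) + 1)⁻¹) •
      ∑ i ∈ Finset.range (m + 1), X i * Hh (m - i)
  decreasing_by exact Nat.lt_succ_of_le (Nat.sub_le m i)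

/-- e_m[X] in the power-sum presentation, via Newton's identity
(m+1)·e_{m+1} = ∑_{i=1}^{m+1} (-1)^{i-1} p_i e_{m+1-i}. -/
noncomputable def Ee : ℕ → SymF
  | 0 => 1
  | (m+1) => (((m : K) + 1)⁻¹) •
      ∑ i ∈ Finset.range (m + 1), ((-1 : K) ^ i) • (X i * Ee (m - i))
  decreasing_by exact Nat.lt_succ_of_le (Nat.sub_le m i)

/-- the plethystic evaluation F ↦ F[q⁻¹·X], i.e. p_m ↦ q^{-m} p_m. -/
noncomputable def qinvX : SymF →ₐ[K] SymF :=
  aeval (fun m : ℕ => ((q ^ (m + 1))⁻¹) • (X m : SymF))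

/-- h_n[q⁻¹X] -/
noncomputable def Hq (n : ℕ) : SymF := qinvX (Hh n)

/-- the substitution F[X] ↦ F[X − (q−1)z⁻¹], with `Polynomial.X` standing for z⁻¹:
p_m ↦ p_m − (q^m − 1)·z^{-m}. -/
noncomputable def phiB : SymF →ₐ[K] Polynomial SymF :=
  aeval (fun m : ℕ => Polynomial.C (X m : SymF) -
    Polynomial.C (MvPolynomial.C (q ^ (m + 1) - 1)) * Polynomial.X ^ (m + 1))

/-- the operator (B_r F)[X] = F[X−(q−1)z⁻¹]·Exp[−zX] |_{z^r}, using
Exp[−zX] = ∑_m (−1)^m e_m[X] z^m. -/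
noncomputable def Bop (r : ℕ) (F : SymF) : SymF :=
  ∑ j ∈ Finset.range ((phiB F).natDegree + 1),
    ((-1 : K) ^ (r + j)) • (Ee (r + j) * (phiB F).coeff j)

/-- the substitution F[X] ↦ F[X + (q⁻¹−1)z⁻¹], with `Polynomial.X` standing for z⁻¹:
p_m ↦ p_m + (q^{-m} − 1)·z^{-m}. -/
noncomputable def phiC : SymF →ₐ[K] Polynomial SymF :=
  aeval (fun m : ℕ => Polynomial.C (X m : SymF) +
    Polynomial.C (MvPolynomial.C ((q ^ (m + 1))⁻¹ - 1)) * Polynomial.X ^ (m + 1))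

/-- the operator (C_r F)[X] = −q^{1−r}·F[X+(q⁻¹−1)z⁻¹]·Exp[zX] |_{z^r}, using
Exp[zX] = ∑_m h_m[X] z^m. -/
noncomputable def Cop (r : ℕ) (F : SymF) : SymF :=
  (-(q * (q ^ r)⁻¹)) • ∑ j ∈ Finset.range ((phiC F).natDegree + 1),
    (phiC F).coeff j * Hh (r + j)

/-!
Newton's identities say that the generating series `H = ∑ hₙ tⁿ` and `E = ∑ (-1)ⁿ eₙ tⁿ` satisfy
`H' = P H` and `E' = -P E` with `P = ∑ pᵢ₊₁ tⁱ`; hence `H E = 1`, i.e.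
`∑ₖ (-1)ᵏ eₖ h_{n-k} = 0` for `n ≥ 1`. By uniqueness of solutions of `F' = A F`, the substitution
`X ↦ X - (q - 1) z⁻¹` sends `H` to `H · (1 - q z⁻¹ t) / (1 - z⁻¹ t)`, so that
`hₙ[X - (q - 1) z⁻¹] = ∑ⱼ hⱼ[1 - q] h_{n-j} z⁻ʲ`. As `hₙ[q⁻¹X] = q⁻ⁿ hₙ`, the sum multiplied by
`qᵐ` is `∑ₛ (-1)ˢ eₛ h_{m-s} · ∑_{b+j=s} qᵇ hⱼ[1 - q]`, and the inner sum is the coefficient of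
`tˢ` in `1 / (1 - q t) · (1 - q t) / (1 - t) = 1 / (1 - t)`, which is `1`.
-/

open scoped PowerSeries
open Finset (range sum_range_succ)
open Finset.HasAntidiagonal (antidiagonal mem_antidiagonal)

section

variable {R : Type*} [CommRing R]

theorem PowerSeries.eq_of_derivative_eq_mul [IsAddTorsionFree R] {a f g : R⟦X⟧}
    (hf : d⁄dX R f = a * f) (hg : d⁄dX R g = a * g)
    (h0 : PowerSeries.constantCoeff f = PowerSeries.constantCoeff g) : f = g := by
  ext n
  induction n using Nat.strong_induction_on with
  | _ n ih =>
    cases n with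
    | zero => simpa using h0
    | succ n =>
      have hf' := congrArg (PowerSeries.coeff n) hf
      have hg' := congrArg (PowerSeries.coeff n) hg
      rw [PowerSeries.coeff_derivative, PowerSeries.coeff_mul] at hf' hg'
      have hsum : ∑ p ∈ antidiagonal n, PowerSeries.coeff p.1 a * PowerSeries.coeff p.2 f
          = ∑ p ∈ antidiagonal n, PowerSeries.coeff p.1 a * PowerSeries.coeff p.2 g :=
        Finset.sum_congr rfl fun p hp => by
          rw [ih p.2 (by rw [mem_antidiagonal] at hp; omega)]
      rw [hsum, ← hg', mul_comm, mul_comm _ ((n : R) + 1)] at hf'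
      exact_mod_cast nsmul_right_injective n.succ_ne_zero
        (by simpa only [nsmul_eq_mul, Nat.cast_succ] using hf')

theorem PowerSeries.derivative_mul (f g : R⟦X⟧) :
    d⁄dX R (f * g) = f * d⁄dX R g + g * d⁄dX R f :=
  (d⁄dX R).leibniz f g

theorem PowerSeries.derivative_map {S : Type*} [CommRing S] (φ : R →+* S) (f : R⟦X⟧) :
    d⁄dX S (PowerSeries.map φ f) = PowerSeries.map φ (d⁄dX R f) := by
  ext n
  simp [PowerSeries.coeff_derivative]

end

theorem Hh_succ_smul (m : ℕ) :
    ((m : K) + 1) • Hh (m + 1) = ∑ i ∈ range (m + 1), X i * Hh (m - i) := by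
  rw [Hh, smul_smul, mul_inv_cancel₀ (Nat.cast_add_one_ne_zero m), one_smul]

theorem Ee_succ_smul (m : ℕ) :
    ((m : K) + 1) • Ee (m + 1) = ∑ i ∈ range (m + 1), (-1 : K) ^ i • (X i * Ee (m - i)) := by
  rw [Ee, smul_smul, mul_inv_cancel₀ (Nat.cast_add_one_ne_zero m), one_smul]

theorem q_ne_zero : q ≠ 0 := RatFunc.X_ne_zero

theorem Hq_eq_smul_Hh (n : ℕ) : Hq n = (q ^ n)⁻¹ • Hh n := by
  induction n using Nat.strong_induction_on with
  | _ n ih =>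
    cases n with
    | zero => simp [Hq, Hh]
    | succ m =>
      have hterm : ∀ i ∈ range (m + 1),
          qinvX (X i * Hh (m - i)) = (q ^ (m + 1))⁻¹ • (X i * Hh (m - i)) := fun i hi => by
        have hi : i + 1 + (m - i) = m + 1 := by rw [Finset.mem_range] at hi; omega
        rw [map_mul, ← Hq, ih (m - i) (by omega), qinvX, aeval_X, smul_mul_smul_comm,
          ← mul_inv, ← pow_add, hi]
      rw [Hq, Hh, map_smul, map_sum, Finset.sum_congr rfl hterm, ← Finset.smul_sum, smul_comm]

def powerSumSeries : SymF⟦X⟧ := PowerSeries.mk X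

def hSeries : SymF⟦X⟧ := PowerSeries.mk Hh

def eSeries : SymF⟦X⟧ := PowerSeries.mk fun n => (-1 : K) ^ n • Ee n

theorem derivative_hSeries : d⁄dX SymF hSeries = powerSumSeries * hSeries := by
  refine PowerSeries.ext fun n => ?_
  rw [PowerSeries.coeff_derivative, PowerSeries.coeff_mul,
    Finset.Nat.sum_antidiagonal_eq_sum_range_succ_mk]
  simp only [hSeries, powerSumSeries, PowerSeries.coeff_mk]
  rw [← Hh_succ_smul, MvPolynomial.smul_eq_C_mul, mul_comm]
  simp

theorem derivative_eSeries : d⁄dX SymF eSeries = -powerSumSeries * eSeries := by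
  refine PowerSeries.ext fun n => ?_
  rw [PowerSeries.coeff_derivative, PowerSeries.coeff_mul,
    Finset.Nat.sum_antidiagonal_eq_sum_range_succ_mk]
  simp only [eSeries, powerSumSeries, map_neg, PowerSeries.coeff_mk]
  have hsign : ∀ i ∈ range (n + 1), -X i * ((-1 : K) ^ (n - i) • Ee (n - i))
      = (-1 : K) ^ (n + 1) • ((-1 : K) ^ i • (X i * Ee (n - i))) := fun i hi => by
    have hi : n + 1 + i = n - i + 2 * i + 1 := by rw [Finset.mem_range] at hi; omega
    rw [smul_smul, ← pow_add, hi, pow_succ, pow_add, pow_mul, neg_one_sq, one_pow, mul_one,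
      mul_neg_one, neg_smul, mul_smul_comm, neg_mul, smul_neg]
  rw [Finset.sum_congr rfl hsign, ← Finset.smul_sum, ← Ee_succ_smul, smul_comm,
    MvPolynomial.smul_eq_C_mul _ ((n : K) + 1), mul_comm]
  simp

theorem hSeries_mul_eSeries : hSeries * eSeries = 1 := by
  refine PowerSeries.derivative.ext ?_ ?_
  · rw [PowerSeries.derivative_mul, derivative_hSeries, derivative_eSeries,
      PowerSeries.derivative_one]
    ring
  · simp [hSeries, eSeries, Hh, Ee]

theorem sum_neg_one_pow_smul_Ee_mul_Hh {n : ℕ} (hn : n ≠ 0) :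
    ∑ k ∈ range (n + 1), (-1 : K) ^ k • (Ee k * Hh (n - k)) = 0 := by
  have h := congrArg (PowerSeries.coeff n) hSeries_mul_eSeries
  rw [mul_comm, PowerSeries.coeff_mul, Finset.Nat.sum_antidiagonal_eq_sum_range_succ_mk,
    PowerSeries.coeff_one, if_neg hn] at h
  simpa [eSeries, hSeries, smul_mul_assoc] using h

/-- `h_k[1 - q]`, the coefficients of `(1 - q t) / (1 - t)`. -/
def hOneSubQ (k : ℕ) : K := if k = 0 then 1 else 1 - q

theorem succ_mul_hOneSubQ_succ (n : ℕ) :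
    ((n : K) + 1) * hOneSubQ (n + 1)
      = -∑ k ∈ range (n + 1), (q ^ (k + 1) - 1) * hOneSubQ (n - k) := by
  have hterm : ∀ k ∈ range n,
      (q ^ (k + 1) - 1) * hOneSubQ (n - k) = (1 - q) * (q * q ^ k - 1) := fun k hk => by
    rw [hOneSubQ, if_neg (by rw [Finset.mem_range] at hk; omega)]
    ring
  rw [sum_range_succ, Finset.sum_congr rfl hterm, ← Finset.mul_sum, Finset.sum_sub_distrib,
    ← Finset.mul_sum, Finset.sum_const, Finset.card_range, Nat.sub_self, nsmul_eq_mul, mul_one]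
  simp only [hOneSubQ, Nat.add_one_ne_zero, if_false, if_true]
  linear_combination (-q) * geom_sum_mul q n

theorem sum_pow_mul_hOneSubQ (s : ℕ) : ∑ b ∈ range (s + 1), q ^ b * hOneSubQ (s - b) = 1 := by
  have hterm : ∀ b ∈ range s, q ^ b * hOneSubQ (s - b) = q ^ b * (1 - q) := fun b hb => by
    rw [hOneSubQ, if_neg (by rw [Finset.mem_range] at hb; omega)]
  rw [sum_range_succ, Finset.sum_congr rfl hterm, ← Finset.sum_mul, Nat.sub_self, hOneSubQ,
    if_pos rfl]
  linear_combination (-1) * geom_sum_mul q s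

/-- `∑ₖ pₖ₊₁[(q - 1) z⁻¹] tᵏ`, with `Polynomial.X` standing for `z⁻¹` as in `phiB`. -/
def shiftPowerSumSeries : (Polynomial SymF)⟦X⟧ :=
  PowerSeries.mk fun k => (q ^ (k + 1) - 1) • Polynomial.X ^ (k + 1)

def shiftHSeries : (Polynomial SymF)⟦X⟧ :=
  PowerSeries.mk fun k => hOneSubQ k • Polynomial.X ^ k

theorem derivative_shiftHSeries :
    d⁄dX (Polynomial SymF) shiftHSeries = -(shiftPowerSumSeries * shiftHSeries) := by
  refine PowerSeries.ext fun n => ?_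
  have hterm : ∀ k ∈ range (n + 1),
      PowerSeries.coeff k shiftPowerSumSeries * PowerSeries.coeff (n - k) shiftHSeries
        = ((q ^ (k + 1) - 1) * hOneSubQ (n - k)) • (Polynomial.X ^ (n + 1) : Polynomial SymF) :=
    fun k hk => by
      have hk : k + 1 + (n - k) = n + 1 := by rw [Finset.mem_range] at hk; omega
      rw [shiftPowerSumSeries, shiftHSeries, PowerSeries.coeff_mk, PowerSeries.coeff_mk,
        smul_mul_smul_comm, ← pow_add, hk]
  rw [PowerSeries.coeff_derivative, map_neg, PowerSeries.coeff_mul,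
    Finset.Nat.sum_antidiagonal_eq_sum_range_succ_mk, Finset.sum_congr rfl hterm,
    ← Finset.sum_smul, ← neg_smul, ← succ_mul_hOneSubQ_succ, shiftHSeries, PowerSeries.coeff_mk,
    mul_comm, mul_smul, add_smul, one_smul, add_mul, one_mul, Nat.cast_smul_eq_nsmul,
    nsmul_eq_mul]

theorem phiB_X (i : ℕ) :
    phiB (X i) = Polynomial.C (X i) - (q ^ (i + 1) - 1) • Polynomial.X ^ (i + 1) := by
  rw [phiB, aeval_X, Algebra.smul_def, Polynomial.algebraMap_apply, MvPolynomial.algebraMap_eq]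

theorem map_phiB_powerSumSeries :
    PowerSeries.map (phiB : SymF →+* Polynomial SymF) powerSumSeries
      = PowerSeries.map Polynomial.C powerSumSeries - shiftPowerSumSeries := by
  refine PowerSeries.ext fun n => ?_
  rw [map_sub, PowerSeries.coeff_map, PowerSeries.coeff_map]
  simp only [powerSumSeries, shiftPowerSumSeries, PowerSeries.coeff_mk]
  exact phiB_X n

theorem map_phiB_hSeries :
    PowerSeries.map (phiB : SymF →+* Polynomial SymF) hSeries
      = PowerSeries.map Polynomial.C hSeries * shiftHSeries := by
  refine PowerSeries.eq_of_derivative_eq_mul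
    (a := PowerSeries.map (phiB : SymF →+* Polynomial SymF) powerSumSeries) ?_ ?_ ?_
  · rw [PowerSeries.derivative_map, derivative_hSeries, map_mul]
  · rw [PowerSeries.derivative_mul, PowerSeries.derivative_map, derivative_hSeries,
      derivative_shiftHSeries, map_phiB_powerSumSeries, map_mul]
    ring
  · simp only [map_mul, ← PowerSeries.coeff_zero_eq_constantCoeff_apply, PowerSeries.coeff_map]
    simp [hSeries, shiftHSeries, Hh, hOneSubQ]

theorem coeff_phiB_Hh (n j : ℕ) :
    (phiB (Hh n)).coeff j = if j ≤ n then hOneSubQ j • Hh (n - j) else 0 := by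
  have h := congrArg (PowerSeries.coeff n) map_phiB_hSeries
  rw [mul_comm, PowerSeries.coeff_map, PowerSeries.coeff_mul,
    Finset.Nat.sum_antidiagonal_eq_sum_range_succ_mk] at h
  unfold hSeries shiftHSeries at h
  simp only [PowerSeries.coeff_mk, PowerSeries.coeff_map, RingHom.coe_coe] at h
  rw [h, Polynomial.finsetSum_coeff]
  simp [Polynomial.coeff_X_pow]

theorem Bop_eq_sum_of_natDegree_le {F : SymF} {N : ℕ} (r : ℕ) (h : (phiB F).natDegree ≤ N) :
    Bop r F = ∑ j ∈ range (N + 1), (-1 : K) ^ (r + j) • (Ee (r + j) * (phiB F).coeff j) :=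
  Finset.sum_subset (Finset.range_subset_range.mpr (by omega)) fun j _ hj => by
    rw [Polynomial.coeff_eq_zero_of_natDegree_lt (by rw [Finset.mem_range] at hj; omega),
      mul_zero, smul_zero]

theorem Bop_Hq (r n : ℕ) :
    Bop r (Hq n) = (q ^ n)⁻¹ • ∑ j ∈ range (n + 1),
      ((-1 : K) ^ (r + j) * hOneSubQ j) • (Ee (r + j) * Hh (n - j)) := by
  have hcoeff (j : ℕ) : (phiB (Hq n)).coeff j
      = (q ^ n)⁻¹ • if j ≤ n then hOneSubQ j • Hh (n - j) else 0 := by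
    rw [Hq_eq_smul_Hh, map_smul, Polynomial.coeff_smul, coeff_phiB_Hh]
  have hdeg : (phiB (Hq n)).natDegree ≤ n :=
    Polynomial.natDegree_le_iff_coeff_eq_zero.mpr fun j hj => by
      rw [hcoeff, if_neg (by omega), smul_zero]
  rw [Bop_eq_sum_of_natDegree_le r hdeg, Finset.smul_sum]
  refine Finset.sum_congr rfl fun j hj => ?_
  rw [hcoeff, if_pos (by rw [Finset.mem_range] at hj; omega)]
  simp only [mul_smul_comm, smul_smul]
  congr 1
  ring

theorem smul_sum_Bop_Hq (m : ℕ) :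
    q ^ m • ∑ b ∈ range (m + 1), Bop b (Hq (m - b))
      = ∑ s ∈ range (m + 1), (-1 : K) ^ s • (Ee s * Hh (m - s)) := calc
  _ = ∑ b ∈ range (m + 1), ∑ j ∈ range (m + 1 - b),
        (q ^ b * ((-1 : K) ^ (b + j) * hOneSubQ j)) • (Ee (b + j) * Hh (m - b - j)) := by
      rw [Finset.smul_sum]
      refine Finset.sum_congr rfl fun b hb => ?_
      have hb : b ≤ m := by rw [Finset.mem_range] at hb; omega
      rw [Bop_Hq, smul_smul, pow_sub₀ q q_ne_zero hb, Nat.sub_add_comm hb, Finset.smul_sum]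
      refine Finset.sum_congr rfl fun j _ => ?_
      rw [smul_smul, Nat.sub_sub]
      congr 1
      field_simp [q_ne_zero]
  _ = ∑ s ∈ range (m + 1), ∑ b ∈ range (s + 1),
        (q ^ b * ((-1 : K) ^ (b + (s - b)) * hOneSubQ (s - b)))
          • (Ee (b + (s - b)) * Hh (m - b - (s - b))) :=
      (Finset.sum_range_diag_flip _ _).symm
  _ = ∑ s ∈ range (m + 1), (∑ b ∈ range (s + 1), q ^ b * hOneSubQ (s - b))
        • (-1 : K) ^ s • (Ee s * Hh (m - s)) := by
      refine Finset.sum_congr rfl fun s _ => ?_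
      rw [Finset.sum_smul]
      refine Finset.sum_congr rfl fun b hb => ?_
      have hb : b ≤ s := by rw [Finset.mem_range] at hb; omega
      rw [Nat.add_sub_cancel' hb, Nat.sub_sub, Nat.add_sub_cancel' hb, smul_smul]
      congr 1
      ring
  _ = _ := by simp only [sum_pow_mul_hOneSubQ, one_smul]

theorem sum_Bb_Hq_eq_zero :
    ∀ m : ℕ, 1 ≤ m →
      ∑ b ∈ Finset.range (m + 1), Bop b (Hq (m - b)) = 0 := by
  intro m hm
  have h := smul_sum_Bop_Hq m
  rw [sum_neg_one_pow_smul_Ee_mul_Hh (by omega)] at h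
  exact (smul_eq_zero.mp h).resolve_left (pow_ne_zero m q_ne_zero)

end
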